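/- (Corollary: small-ν behavior of the I^{1/2} prior.) The function ν ↦ √(I(ν)), where I(ν) = ψ₁(ν/2) − ψ₁((ν+1)/2) − 2(ν+5)/(ν(ν+1)(ν+3)), is O(ν⁻¹) as ν → 0 from the right. -/
import Mathlib


open Filter Asymptotics

/-- The trigamma function `ψ₁(x) = ∑_{n=0}^∞ 1/(x+n)²`. -/
noncomputable def trigamma (x : ℝ) : ℝ := ∑' n : ℕ, 1 / (x + n) ^ 2

/-- The Fisher information for the degrees of freedom of the Student-t model
(per observation, up to the factor `n/4`). -/
noncomputable def fisherNu (ν : ℝ) : ℝ :=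
  trigamma (ν / 2) - trigamma ((ν + 1) / 2) - 2 * (ν + 5) / (ν * (ν + 1) * (ν + 3))

lemma summable_succ_shift : Summable (fun n : ℕ => 1 / ((n : ℝ) + 1) ^ 2) := by
  have := hasSum_zeta_two.summable
  exact_mod_cast (summable_nat_add_iff 1).mpr this

lemma tsum_succ_le : (∑' n : ℕ, 1 / ((n : ℝ) + 1) ^ 2) ≤ 2 := by
  have hle : (∑' n : ℕ, 1 / ((n : ℝ) + 1) ^ 2) ≤ ∑' n : ℕ, 1 / (n : ℝ) ^ 2 := by
    refine Summable.tsum_le_tsum_of_inj (fun n => n + 1) (add_left_injective 1)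
      (fun c _ => by positivity) (fun n => by push_cast; exact le_rfl) summable_succ_shift
      hasSum_zeta_two.summable
  rw [hasSum_zeta_two.tsum_eq] at hle
  nlinarith [Real.pi_lt_d2, Real.pi_pos, hle]

lemma summable_shifted {x : ℝ} (hx : 0 < x) :
    Summable (fun n : ℕ => 1 / (x + (n + 1)) ^ 2) := by
  refine Summable.of_nonneg_of_le (fun n => by positivity) (fun n => ?_) summable_succ_shift
  have h2 : ((n : ℝ) + 1) ^ 2 ≤ (x + ((n : ℝ) + 1)) ^ 2 := by nlinarith [Nat.cast_nonneg (α := ℝ) n]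
  exact one_div_le_one_div_of_le (by positivity) h2

lemma summable_trigamma {x : ℝ} (hx : 0 < x) :
    Summable (fun n : ℕ => 1 / (x + n) ^ 2) := by
  rw [← summable_nat_add_iff 1]
  simpa using summable_shifted hx

lemma trigamma_nonneg {x : ℝ} (hx : 0 < x) : 0 ≤ trigamma x :=
  tsum_nonneg (fun n => by positivity)

lemma trigamma_le {x : ℝ} (hx : 0 < x) : trigamma x ≤ 1 / x ^ 2 + 2 := by
  have hs := summable_trigamma hx
  rw [trigamma, Summable.tsum_eq_zero_add hs]
  have tail : (∑' n : ℕ, 1 / (x + ((n : ℝ) + 1)) ^ 2) ≤ ∑' n : ℕ, 1 / ((n : ℝ) + 1) ^ 2 := by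
    refine Summable.tsum_le_tsum (fun n => ?_) (summable_shifted hx) summable_succ_shift
    have h2 : ((n : ℝ) + 1) ^ 2 ≤ (x + ((n : ℝ) + 1)) ^ 2 := by nlinarith [Nat.cast_nonneg (α := ℝ) n]
    exact one_div_le_one_div_of_le (by positivity) h2
  have h3 := le_trans tail tsum_succ_le
  push_cast at h3 ⊢
  simp only [add_zero]
  linarith

theorem sqrt_fisherNu_isBigO_zero_right :
    (fun ν : ℝ => Real.sqrt (fisherNu ν)) =O[nhdsWithin 0 (Set.Ioi 0)]
      (fun ν : ℝ => ν⁻¹) := by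
  rw [isBigO_iff]
  refine ⟨Real.sqrt 6, ?_⟩
  filter_upwards [Ioo_mem_nhdsGT_of_mem (by norm_num : (0:ℝ) ∈ Set.Ico 0 1)] with ν hν
  obtain ⟨hν0, hν1⟩ := hν
  have hfle : fisherNu ν ≤ 6 / ν ^ 2 := by
    have h1 : trigamma (ν / 2) ≤ 1 / (ν / 2) ^ 2 + 2 := trigamma_le (by linarith)
    have h2 : 0 ≤ trigamma ((ν + 1) / 2) := trigamma_nonneg (by linarith)
    have h3 : 0 ≤ 2 * (ν + 5) / (ν * (ν + 1) * (ν + 3)) := by positivity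
    have h4 : 1 / (ν / 2) ^ 2 = 4 / ν ^ 2 := by field_simp; ring
    have h5 : (2 : ℝ) ≤ 2 / ν ^ 2 := by
      rw [le_div_iff₀ (by positivity)]
      nlinarith
    rw [fisherNu]
    have : 4 / ν ^ 2 + 2 / ν ^ 2 = 6 / ν ^ 2 := by ring
    linarith [h4 ▸ h1]
  have hsqrt : Real.sqrt (fisherNu ν) ≤ Real.sqrt 6 * ν⁻¹ := by
    have : Real.sqrt (6 / ν ^ 2) = Real.sqrt 6 * ν⁻¹ := by
      rw [Real.sqrt_div (by norm_num : (0:ℝ) ≤ 6), Real.sqrt_sq hν0.le, div_eq_mul_inv]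
    calc Real.sqrt (fisherNu ν) ≤ Real.sqrt (6 / ν ^ 2) := Real.sqrt_le_sqrt hfle
      _ = Real.sqrt 6 * ν⁻¹ := this
  rw [Real.norm_eq_abs, Real.norm_eq_abs, abs_of_nonneg (Real.sqrt_nonneg _),
    abs_of_nonneg (le_of_lt (inv_pos.mpr hν0))]
  exact hsqrt
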